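/- Let F be a linearly ordered field, A and B magnitudes of F, and b ∈ F. Then the set b • A + A * B (Minkowski operations) is itself a magnitude of F, i.e. an order-convex additive subgroup of F; in particular, the product of a magnitude with a coset is a magnitude. -/

import Mathlib

open Pointwise

/-- A *magnitude* of a linearly ordered field `F` is an order-convex additive subgroup of `F`,
given as a set: it contains `0`, is closed under addition and negation, and is order-convex. -/
def IsMagnitude {F : Type*} [Field F] [LinearOrder F] [IsStrictOrderedRing F] (A : Set F) : Prop :=
  (0 : F) ∈ A ∧ (∀ x ∈ A, ∀ y ∈ A, x + y ∈ A) ∧ (∀ x ∈ A, -x ∈ A) ∧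
    (∀ x ∈ A, ∀ y ∈ A, ∀ z : F, x ≤ z → z ≤ y → z ∈ A)

/-- Order relation on subsets of `F`: `S ≤ T` iff every element of `S` is below some element of `T`. -/
def SetLE {F : Type*} [Field F] [LinearOrder F] [IsStrictOrderedRing F] (S T : Set F) : Prop :=
  ∀ x ∈ S, ∃ y ∈ T, x ≤ y

/-! A magnitude is the same as a set containing `0`, closed under addition, and *solid*:
with `x` it contains every `z` with `|z| ≤ |x|`. Solidity of `b • A` and `A * B` comes from
writing `z = (z / c) * c`, where `|z / c| ≤ |x|` whenever `|z| ≤ |x * c|`; closure of `A * B`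
under addition from `|a₁c₁ + a₂c₂| ≤ (|a₁| + |a₂|)(|c₁| + |c₂|)`; and solidity of a sum `C + D`
from the Riesz decomposition: `|z| ≤ p + q` with `p, q ≥ 0` splits `z` as `u + v` with
`|u| ≤ p`, `|v| ≤ q`. -/

theorem exists_add_eq_of_abs_le_add {α : Type*} [AddCommGroup α] [LinearOrder α]
    [IsOrderedAddMonoid α] {z p q : α} (hp : 0 ≤ p) (hq : 0 ≤ q) (h : |z| ≤ p + q) :
    ∃ u v, |u| ≤ p ∧ |v| ≤ q ∧ u + v = z := by
  obtain ⟨hzl, hzr⟩ := abs_le.mp h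
  rcases le_total z p with hzp | hpz
  · rcases le_total (-p) z with hpz' | hzp'
    · exact ⟨z, 0, abs_le.mpr ⟨hpz', hzp⟩, by simpa using hq, add_zero z⟩
    · refine ⟨-p, z + p, by simp [abs_of_nonneg hp], abs_le.mpr ⟨?_, ?_⟩, by abel⟩ <;> grind
  · refine ⟨p, z - p, by simp [abs_of_nonneg hp], abs_le.mpr ⟨?_, ?_⟩, by abel⟩ <;> grind

theorem div_mul_cancel_of_abs_le_abs_mul {F : Type*} [Field F] [LinearOrder F]
    [IsStrictOrderedRing F] {x z c : F} (h : |z| ≤ |x * c|) : z / c * c = z := by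
  rcases eq_or_ne c 0 with rfl | hc
  · simpa [eq_comm] using h
  · exact div_mul_cancel₀ z hc

namespace IsMagnitude

variable {F : Type*} [Field F] [LinearOrder F] [IsStrictOrderedRing F] {A B C D : Set F}

theorem zero_mem (hA : IsMagnitude A) : (0 : F) ∈ A := hA.1

theorem add_mem (hA : IsMagnitude A) {x y : F} (hx : x ∈ A) (hy : y ∈ A) : x + y ∈ A :=
  hA.2.1 x hx y hy

theorem neg_mem (hA : IsMagnitude A) {x : F} (hx : x ∈ A) : -x ∈ A := hA.2.2.1 x hx

theorem abs_mem (hA : IsMagnitude A) {x : F} (hx : x ∈ A) : |x| ∈ A := by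
  rcases abs_choice x with h | h <;> rw [h]
  · exact hx
  · exact hA.neg_mem hx

theorem mem_of_abs_le (hA : IsMagnitude A) {x z : F} (hx : x ∈ A) (hz : |z| ≤ |x|) : z ∈ A :=
  hA.2.2.2 _ (hA.neg_mem (hA.abs_mem hx)) _ (hA.abs_mem hx) z (abs_le.mp hz).1 (abs_le.mp hz).2

theorem of_abs_le (h0 : (0 : F) ∈ A) (hadd : ∀ x ∈ A, ∀ y ∈ A, x + y ∈ A)
    (hsolid : ∀ x ∈ A, ∀ z, |z| ≤ |x| → z ∈ A) : IsMagnitude A := by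
  refine ⟨h0, hadd, fun x hx ↦ hsolid x hx _ (abs_neg x).le, fun x hx y hy z hxz hzy ↦ ?_⟩
  rcases max_choice |x| |y| with h | h
  · exact hsolid x hx z (h ▸ abs_le_max_abs_abs hxz hzy)
  · exact hsolid y hy z (h ▸ abs_le_max_abs_abs hxz hzy)

theorem div_mem_of_abs_le_abs_mul (hA : IsMagnitude A) {x z c : F} (hx : x ∈ A)
    (h : |z| ≤ |x * c|) : z / c ∈ A := by
  refine hA.mem_of_abs_le hx ?_
  rcases eq_or_ne c 0 with rfl | hc
  · simp
  · rw [abs_div, div_le_iff₀ (abs_pos.mpr hc), ← abs_mul]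
    exact h

theorem smul (hA : IsMagnitude A) (b : F) : IsMagnitude (b • A) := by
  refine of_abs_le ⟨0, hA.zero_mem, smul_zero b⟩ ?_ ?_
  · rintro _ ⟨x, hx, rfl⟩ _ ⟨y, hy, rfl⟩
    exact ⟨x + y, hA.add_mem hx hy, smul_add b x y⟩
  · rintro _ ⟨x, hx, rfl⟩ z hz
    replace hz : |z| ≤ |x * b| := by rwa [mul_comm]
    exact ⟨z / b, hA.div_mem_of_abs_le_abs_mul hx hz,
      by simp only [smul_eq_mul, mul_comm b, div_mul_cancel_of_abs_le_abs_mul hz]⟩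

theorem mul_mem_of_abs_le_abs_mul (hA : IsMagnitude A) {x c z : F} (hx : x ∈ A) (hc : c ∈ B)
    (h : |z| ≤ |x * c|) : z ∈ A * B :=
  ⟨z / c, hA.div_mem_of_abs_le_abs_mul hx h, c, hc, div_mul_cancel_of_abs_le_abs_mul h⟩

theorem mul (hA : IsMagnitude A) (hB : IsMagnitude B) : IsMagnitude (A * B) := by
  refine of_abs_le ⟨0, hA.zero_mem, 0, hB.zero_mem, mul_zero 0⟩ ?_ ?_
  · rintro _ ⟨a₁, ha₁, c₁, hc₁, rfl⟩ _ ⟨a₂, ha₂, c₂, hc₂, rfl⟩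
    refine hA.mul_mem_of_abs_le_abs_mul (hA.add_mem (hA.abs_mem ha₁) (hA.abs_mem ha₂))
      (hB.add_mem (hB.abs_mem hc₁) (hB.abs_mem hc₂)) ?_
    calc |a₁ * c₁ + a₂ * c₂| ≤ |a₁| * |c₁| + |a₂| * |c₂| := by
          simpa only [abs_mul] using abs_add_le (a₁ * c₁) (a₂ * c₂)
      _ ≤ (|a₁| + |a₂|) * (|c₁| + |c₂|) := by
          nlinarith [abs_nonneg a₁, abs_nonneg a₂, abs_nonneg c₁, abs_nonneg c₂]
      _ = |(|a₁| + |a₂|) * (|c₁| + |c₂|)| := (abs_of_nonneg (by positivity)).symm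
  · rintro _ ⟨a, ha, c, hc, rfl⟩ z hz
    exact hA.mul_mem_of_abs_le_abs_mul ha hc hz

theorem add (hC : IsMagnitude C) (hD : IsMagnitude D) : IsMagnitude (C + D) := by
  refine of_abs_le ⟨0, hC.zero_mem, 0, hD.zero_mem, add_zero 0⟩ ?_ ?_
  · rintro _ ⟨c₁, hc₁, d₁, hd₁, rfl⟩ _ ⟨c₂, hc₂, d₂, hd₂, rfl⟩
    exact ⟨c₁ + c₂, hC.add_mem hc₁ hc₂, d₁ + d₂, hD.add_mem hd₁ hd₂, add_add_add_comm _ _ _ _⟩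
  · rintro _ ⟨c, hc, d, hd, rfl⟩ z hz
    obtain ⟨u, v, hu, hv, rfl⟩ :=
      exists_add_eq_of_abs_le_add (abs_nonneg c) (abs_nonneg d) (hz.trans (abs_add_le c d))
    exact ⟨u, hC.mem_of_abs_le hc hu, v, hD.mem_of_abs_le hd hv, rfl⟩

end IsMagnitude

theorem magnitude_mul_coset_is_magnitude {F : Type*} [Field F] [LinearOrder F] [IsStrictOrderedRing F]
    (A B : Set F) (hA : IsMagnitude A) (hB : IsMagnitude B) (b : F) :
    IsMagnitude (b • A + A * B) :=
  (hA.smul b).add (hA.mul hB)
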